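/- arXiv:2101.01893 — 2 statements merged into one kernel-verified Lean document; each statement's English description precedes it below -/
import Mathlib

section
/- The generating function of the degenerate Bernoulli numbers equals the Gauss hypergeometric function: t/(e_λ(t)-1) = ₂F₁(1-λ, 1; 2; 1-e_λ(t)), i.e., Σ_{n≥0} β_{n,λ} t^n/n! = Σ_{k≥0} (⟨1-λ⟩_k ⟨1⟩_k / ⟨2⟩_k) (1-e_λ(t))^k / k!. -/
open Finset PowerSeries

noncomputable section

/-- The generalized (degenerate) falling factorial `(x)_{n,λ} = ∏_{j<n} (x - jλ)`. -/
def dfall (x : ℝ) (n : ℕ) (lam : ℝ) : ℝ := ∏ j ∈ Finset.range n, (x - j * lam)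

/-- The degenerate exponential `e_λ^x(t) = Σ_{n≥0} (x)_{n,λ} t^n / n!` as a formal power series. -/
def degExp (lam x : ℝ) : PowerSeries ℝ :=
  PowerSeries.mk fun n => dfall x n lam / n.factorial

/-- The degenerate Stirling numbers of the second kind, defined by
`(1/k!)(e_λ(t)-1)^k = Σ_{n≥k} S_{2,λ}(n,k) t^n/n!`. -/
def S2 (lam : ℝ) (n k : ℕ) : ℝ :=
  (n.factorial : ℝ) / (k.factorial : ℝ) * PowerSeries.coeff n ((degExp lam 1 - 1) ^ k)

/-- The degenerate Stirling polynomials of the second kind, defined by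
`(1/k!)(e_λ(t)-1)^k e_λ^x(t) = Σ_{n≥k} S_{2,λ}(n,k|x) t^n/n!`. -/
def S2p (lam : ℝ) (n k : ℕ) (x : ℝ) : ℝ :=
  (n.factorial : ℝ) / (k.factorial : ℝ) *
    PowerSeries.coeff n ((degExp lam 1 - 1) ^ k * degExp lam x)

/-- The degenerate logarithm `log_λ(1+t) = Σ_{n≥1} λ^{n-1}(1)_{n,1/λ} t^n/n!`. -/
def degLog (lam : ℝ) : PowerSeries ℝ :=
  PowerSeries.mk fun n => if n = 0 then 0 else lam ^ (n - 1) * dfall 1 n (1 / lam) / n.factorial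

/-- The degenerate Stirling numbers of the first kind, defined by
`(1/k!)(log_λ(1+t))^k = Σ_{n≥k} S_{1,λ}(n,k) t^n/n!`. -/
def S1 (lam : ℝ) (n k : ℕ) : ℝ :=
  (n.factorial : ℝ) / (k.factorial : ℝ) * PowerSeries.coeff n ((degLog lam) ^ k)

/-- Rising factorial `⟨a⟩_k = a(a+1)⋯(a+k-1)`. -/
def rising (a : ℝ) (k : ℕ) : ℝ := ∏ j ∈ Finset.range k, (a + j)

/-- The generalized degenerate Bernoulli polynomials `β_{n,λ}^{(p)}(x)`, defined by
`Σ_{n≥0} β_{n,λ}^{(p)}(x) t^n/n! = ₂F₁(1-λ,1;p+2;1-e_λ(t)) e_λ^x(t)`.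
Since `1 - e_λ(t)` has zero constant term, the coefficient of `t^n` in the
hypergeometric series only involves the terms with `k ≤ n`. -/
def genBetaPoly (lam : ℝ) (p : ℤ) (x : ℝ) (n : ℕ) : ℝ :=
  (n.factorial : ℝ) * PowerSeries.coeff n
    ((∑ k ∈ Finset.range (n + 1),
        (rising (1 - lam) k * rising 1 k / (rising ((p : ℝ) + 2) k * k.factorial)) •
          ((1 - degExp lam 1) ^ k)) * degExp lam x)

/-- The generalized degenerate Bernoulli numbers `β_{n,λ}^{(p)} = β_{n,λ}^{(p)}(0)`. -/
def genBeta (lam : ℝ) (p : ℤ) (n : ℕ) : ℝ := genBetaPoly lam p 0 n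

/-- The degenerate type Eulerian numbers, defined by
`(-1)^{n-m} A_λ(n,m) = Σ_{k=0}^{n-m} λ^k (1)_{k+1,1/λ} C(n-k,m) S_{2,λ}(n,k)`. -/
def Eul (lam : ℝ) (n m : ℕ) : ℝ :=
  (-1 : ℝ) ^ (n - m) * ∑ k ∈ Finset.range (n - m + 1),
    lam ^ k * dfall 1 (k + 1) (1 / lam) * ((n - k).choose m : ℝ) * S2 lam n k

/-! With `φ(u) = u ₂F₁(1 - λ, 1; 2; u) = (1 - (1 - u) ^ λ) / λ`, the claim says `φ(1 - e_λ(t)) = -t`,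
i.e. that `φ` inverts `e_λ(t) = (1 + λ t) ^ (1 / λ)`. To avoid real powers (and the case `λ = 0`)
we argue with differential equations: `e_λ` solves `(1 + λ t) E' = E` and `φ` solves
`(1 - u) φ' = 1 - λ φ`, so by the chain rule `g = -φ(1 - e_λ)` solves `(1 + λ t) g' = 1 + λ g`
with `g(0) = 0`, whose only power series solution is `g = t`. -/

namespace PowerSeries

theorem coeff_X_mul_derivative {R : Type*} [CommSemiring R] (h : R⟦X⟧) (m : ℕ) :
    coeff m (X * d⁄dX R h) = m * coeff m h := by
  cases m with
  | zero => simp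
  | succ m => rw [coeff_succ_X_mul, coeff_derivative]; push_cast; ring

theorem coeff_subst_eq_sum_range {R : Type*} [CommRing R] {u : R⟦X⟧} (hu : constantCoeff u = 0)
    (f : R⟦X⟧) (n : ℕ) :
    coeff n (f.subst u) = ∑ k ∈ range (n + 1), coeff k f * coeff n (u ^ k) := by
  rw [coeff_subst' (HasSubst.of_constantCoeff_zero' hu)]
  refine finsum_eq_sum_of_support_subset _ fun k hk ↦ ?_
  by_contra hkn
  refine hk ?_
  change coeff k f • coeff n (u ^ k) = 0
  rw [smul_eq_mul, coeff_of_lt_order n ?_, mul_zero]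
  calc (n : ℕ∞) < k := by simp_all
    _ ≤ order (u ^ k) := le_order_pow_of_constantCoeff_eq_zero k hu

section CharZero

variable {K : Type*} [Field K] [CharZero K]

theorem eq_zero_of_one_add_smul_X_mul_derivative_eq_smul {a b : K} {h : K⟦X⟧}
    (hode : (1 + a • X) * d⁄dX K h = b • h) (h0 : constantCoeff h = 0) : h = 0 := by
  ext m
  induction m with
  | zero => simpa using h0
  | succ m ih =>
    have hm := congrArg (coeff m) hode
    rw [add_mul, one_mul, smul_mul_assoc, map_add, map_smul, map_smul, coeff_X_mul_derivative,
      coeff_derivative, ih] at hm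
    simp only [smul_eq_mul, mul_zero, add_zero, map_zero] at hm ⊢
    exact (mul_eq_zero.mp hm).resolve_right (by norm_cast)

theorem eq_X_of_one_add_smul_X_mul_derivative_eq {a : K} {g : K⟦X⟧}
    (hode : (1 + a • X) * d⁄dX K g = 1 + a • g) (h0 : constantCoeff g = 0) : g = X := by
  refine sub_eq_zero.mp
    (eq_zero_of_one_add_smul_X_mul_derivative_eq_smul (a := a) (b := a) ?_ (by simp [h0]))
  rw [map_sub, derivative_X, mul_sub, hode, smul_sub]
  ring

theorem subst_one_sub_eq_neg_X {c : K} {E φ : K⟦X⟧} (hE0 : constantCoeff E = 1)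
    (hE : (1 + c • X) * d⁄dX K E = E) (hφ0 : constantCoeff φ = 0)
    (hφ : (1 - X) * d⁄dX K φ = 1 - c • φ) : φ.subst (1 - E) = -X := by
  have hu0 : constantCoeff (1 - E) = 0 := by simp [hE0]
  have hu : HasSubst (1 - E) := HasSubst.of_constantCoeff_zero' hu0
  have hφu := congrArg (substAlgHom (R := K) hu) hφ
  simp only [map_mul, map_sub, map_one, map_smul, substAlgHom_X, coe_substAlgHom] at hφu
  rw [← neg_neg (φ.subst (1 - E))]
  congr 1
  refine eq_X_of_one_add_smul_X_mul_derivative_eq (a := c) ?_ ?_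
  · rw [map_neg, derivative_subst hu, map_sub, derivative_one, zero_sub, smul_neg]
    linear_combination (d⁄dX K φ).subst (1 - E) * hE + hφu
  · rw [map_neg, neg_eq_zero]
    exact constantCoeff_subst_eq_zero hu0 φ hφ0

end CharZero

end PowerSeries

theorem rising_succ (a : ℝ) (k : ℕ) : rising a (k + 1) = rising a k * (a + k) :=
  prod_range_succ _ _

theorem rising_one (k : ℕ) : rising 1 k = k.factorial := by
  induction k with
  | zero => simp [rising]
  | succ k ih => rw [rising_succ, ih, Nat.factorial_succ]; push_cast; ring

theorem rising_two (k : ℕ) : rising 2 k = (k + 1).factorial := by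
  induction k with
  | zero => simp [rising]
  | succ k ih => rw [rising_succ, ih, Nat.factorial_succ (k + 1)]; push_cast; ring

def hypergeom (a b c : ℝ) : PowerSeries ℝ :=
  PowerSeries.mk fun k ↦ rising a k * rising b k / (rising c k * k.factorial)

theorem coeff_hypergeom_one_two (a : ℝ) (k : ℕ) :
    coeff k (hypergeom a 1 2) = rising a k / (k + 1).factorial := by
  rw [hypergeom, coeff_mk, rising_one, rising_two]
  field_simp

theorem one_sub_X_mul_derivative_X_mul_hypergeom (a : ℝ) :
    (1 - X) * d⁄dX ℝ (X * hypergeom a 1 2) = 1 - (1 - a) • (X * hypergeom a 1 2) := by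
  ext m
  rw [sub_mul, one_mul, map_sub, map_sub, map_smul, coeff_X_mul_derivative, coeff_derivative]
  cases m with
  | zero => simp [coeff_hypergeom_one_two, rising]
  | succ m =>
    rw [coeff_succ_X_mul, coeff_succ_X_mul, coeff_hypergeom_one_two, coeff_hypergeom_one_two,
      rising_succ, Nat.factorial_succ (m + 1), coeff_one, if_neg m.succ_ne_zero]
    simp only [smul_eq_mul]
    push_cast
    field_simp
    ring

theorem constantCoeff_degExp (lam x : ℝ) : constantCoeff (degExp lam x) = 1 := by
  simp [degExp, ← coeff_zero_eq_constantCoeff_apply, dfall]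

theorem one_add_smul_X_mul_derivative_degExp (lam x : ℝ) :
    (1 + lam • X) * d⁄dX ℝ (degExp lam x) = x • degExp lam x := by
  ext m
  rw [add_mul, one_mul, smul_mul_assoc, map_add, map_smul, map_smul, coeff_X_mul_derivative,
    coeff_derivative]
  simp only [degExp, coeff_mk, smul_eq_mul]
  rw [show dfall x (m + 1) lam = dfall x m lam * (x - m * lam) from prod_range_succ _ _,
    Nat.factorial_succ]
  push_cast
  field_simp
  ring

theorem stmt3 (lam : ℝ) (B : PowerSeries ℝ)
    (hB : (degExp lam 1 - 1) * B = PowerSeries.X) (n : ℕ) :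
    PowerSeries.coeff n B =
      ∑ k ∈ Finset.range (n + 1),
        rising (1 - lam) k * rising 1 k / (rising 2 k * k.factorial) *
          PowerSeries.coeff n ((1 - degExp lam 1) ^ k) := by
  set E := degExp lam 1
  set F := hypergeom (1 - lam) 1 2
  have hE0 : constantCoeff E = 1 := constantCoeff_degExp lam 1
  have hu0 : constantCoeff (1 - E) = 0 := by simp [hE0]
  have hu : HasSubst (1 - E) := HasSubst.of_constantCoeff_zero' hu0
  have hinv : (X * F).subst (1 - E) = -X :=
    subst_one_sub_eq_neg_X hE0 (by simpa using one_add_smul_X_mul_derivative_degExp lam 1)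
      (by simp) (by simpa using one_sub_X_mul_derivative_X_mul_hypergeom (1 - lam))
  have hF : (E - 1) * F.subst (1 - E) = X := by
    rw [subst_mul hu, subst_X hu] at hinv
    linear_combination -hinv
  have hE1 : E - 1 ≠ 0 := fun h ↦ X_ne_zero (by rw [← hB, h, zero_mul])
  rw [mul_left_cancel₀ hE1 (hB.trans hF.symm), coeff_subst_eq_sum_range hu0]
  simp [F, hypergeom]
end
end

section
/- For all nonnegative integers n, k with n ≥ k, we have Σ_{l=0}^{k} C(k,l) (-1)^{k-l} (l)_{n,λ} = k! · S_{2,λ}(n,k), and if n < k the left-hand sum equals 0. -/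
/-! The alternating sum is `n!` times the `n`-th coefficient of `(e_λ(t) - 1)^k`: expand
binomially and use `e_λ(t)^l = e_λ^l(t)`, which is the degenerate Vandermonde identity
`(x + y)_{n,λ} = ∑ C(n,j) (x)_{j,λ} (y)_{n-j,λ}` read on coefficients. By definition that
coefficient is `n!/k! · S_{2,λ}(n,k)`, and it vanishes for `n < k` because `e_λ(t) - 1` has no
constant term. -/

open Finset PowerSeries

noncomputable section

theorem dfall_succ (x : ℝ) (n : ℕ) (lam : ℝ) :
    dfall x (n + 1) lam = dfall x n lam * (x - n * lam) :=
  prod_range_succ _ _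

theorem dfall_zero_succ (n : ℕ) (lam : ℝ) : dfall 0 (n + 1) lam = 0 :=
  prod_eq_zero (mem_range.2 n.succ_pos) (by simp)

theorem dfall_add (x y lam : ℝ) (n : ℕ) :
    dfall (x + y) n lam =
      ∑ j ∈ range (n + 1), (n.choose j : ℝ) * (dfall x j lam * dfall y (n - j) lam) := by
  induction n with
  | zero => simp [dfall]
  | succ n ih =>
    rw [sum_choose_succ_mul (fun i j => dfall x i lam * dfall y j lam), dfall_succ, ih,
      sum_mul, ← sum_add_distrib]
    refine sum_congr rfl fun j hj => ?_
    have hjn : j ≤ n := Nat.lt_succ_iff.1 (mem_range.1 hj)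
    rw [Nat.sub_add_comm hjn, dfall_succ, dfall_succ, Nat.cast_sub hjn]
    ring

@[simp]
theorem coeff_degExp (lam x : ℝ) (n : ℕ) :
    coeff n (degExp lam x) = dfall x n lam / n.factorial :=
  coeff_mk _ _

theorem degExp_zero (lam : ℝ) : degExp lam 0 = 1 := by
  ext (_ | n)
  · simp [dfall]
  · simp [dfall_zero_succ, coeff_one]

theorem degExp_mul (lam x y : ℝ) : degExp lam x * degExp lam y = degExp lam (x + y) := by
  ext n
  rw [coeff_mul, Nat.sum_antidiagonal_eq_sum_range_succ_mk, coeff_degExp, dfall_add, sum_div]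
  refine sum_congr rfl fun j hj => ?_
  rw [Nat.cast_choose ℝ (Nat.lt_succ_iff.1 (mem_range.1 hj))]
  simp only [coeff_degExp]
  field_simp

theorem degExp_pow (lam x : ℝ) (l : ℕ) : degExp lam x ^ l = degExp lam (l * x) := by
  induction l with
  | zero => simp [degExp_zero]
  | succ l ih => rw [pow_succ, ih, degExp_mul]; push_cast; ring_nf

theorem factorial_mul_coeff_degExp_sub_one_pow (lam x : ℝ) (n k : ℕ) :
    (n.factorial : ℝ) * coeff n ((degExp lam x - 1) ^ k) =
      ∑ l ∈ range (k + 1), (k.choose l : ℝ) * (-1) ^ (k - l) * dfall (l * x) n lam := by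
  rw [sub_eq_add_neg, add_pow, map_sum, mul_sum]
  refine sum_congr rfl fun l _ => ?_
  rw [degExp_pow, ← map_one (C (R := ℝ)), ← map_neg, ← map_pow, ← map_natCast (C (R := ℝ)),
    mul_assoc, ← map_mul, coeff_mul_C, coeff_degExp]
  field_simp

theorem coeff_degExp_sub_one_pow_of_lt (lam x : ℝ) {n k : ℕ} (h : n < k) :
    coeff n ((degExp lam x - 1) ^ k) = 0 := by
  have hX : (X : PowerSeries ℝ) ∣ degExp lam x - 1 := by
    rw [X_dvd_iff, map_sub, map_one, ← coeff_zero_eq_constantCoeff_apply, coeff_degExp]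
    simp [dfall]
  exact X_pow_dvd_iff.1 (pow_dvd_pow_of_dvd hX k) n h

theorem stmt6 (lam : ℝ) (n k : ℕ) :
    (k ≤ n →
      ∑ l ∈ Finset.range (k + 1), (k.choose l : ℝ) * (-1) ^ (k - l) * dfall l n lam =
        (k.factorial : ℝ) * S2 lam n k) ∧
    (n < k →
      ∑ l ∈ Finset.range (k + 1), (k.choose l : ℝ) * (-1) ^ (k - l) * dfall l n lam = 0) := by
  have hsum := factorial_mul_coeff_degExp_sub_one_pow lam 1 n k
  simp only [mul_one] at hsum
  refine ⟨fun _ => ?_, fun h => ?_⟩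
  · rw [← hsum, S2]
    field_simp
  · rw [← hsum, coeff_degExp_sub_one_pow_of_lt lam 1 h, mul_zero]
end
end
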